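/- arXiv:2010.11559 — 3 statements merged into one kernel-verified Lean document; each statement's English description precedes it below -/
import Mathlib

section
/- Let B ∈ ℝ^{n×|E|} be the node-arc incidence matrix of a graph and A*w = B Diag(w) B^T. Then the matrix representation of the composition A A* : ℝ^{|E|} → ℝ^{|E|} is 2I + |B|^T|B|, where |B| is the entrywise absolute value of B. Equivalently, A(A*w) = (2I + |B|^T|B|) w for every w ∈ ℝ^{|E|}. -/
/-!
Since `A(A* w) = diag(Bᵀ B Diag(w) Bᵀ B)`, its `e`-th entry is `∑_f ((BᵀB)_{ef})² w_f`, so it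
suffices that `((BᵀB)_{ef})² = 2δ_{ef} + (|B|ᵀ|B|)_{ef}`. The Gram entry `(BᵀB)_{ef}` is a signed
count of the endpoints shared by `e` and `f`, and `(|B|ᵀ|B|)_{ef}` the unsigned count. For `e = f`
these are `2` and `2`; for distinct edges at most one endpoint is shared, so the signed count
lies in `{-1, 0, 1}` and its square is the unsigned count.
-/

open Matrix Finset

theorem Matrix.transpose_mul_mul_diagonal_mul_transpose_mul_apply_self
    {V E R : Type*} [Fintype V] [Fintype E] [DecidableEq E] [CommSemiring R]
    (B : Matrix V E R) (w : E → R) (e : E) :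
    (Bᵀ * (B * diagonal w * Bᵀ) * B) e e = ∑ f, (Bᵀ * B) e f ^ 2 * w f := by
  have hgram : Bᵀ * (B * diagonal w * Bᵀ) * B = (Bᵀ * B) * diagonal w * (Bᵀ * B) := by
    simp only [Matrix.mul_assoc]
  have hsymm : (Bᵀ * B).IsSymm := by rw [IsSymm, transpose_mul, transpose_transpose]
  rw [hgram, mul_apply]
  refine sum_congr rfl fun f _ => ?_
  rw [mul_diagonal, hsymm.apply e f]
  ring

section Incidence

variable {V E : Type*} [DecidableEq V]

def incidenceMatrix (s t : E → V) : Matrix V E ℝ :=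
  of fun i e => (if i = s e then 1 else 0) - (if i = t e then 1 else 0)

theorem abs_incidenceMatrix_apply {s t : E → V} {e : E} (hst : s e ≠ t e) (i : V) :
    |incidenceMatrix s t i e| = (if i = s e then 1 else 0) + (if i = t e then 1 else 0) := by
  by_cases hs : i = s e <;> by_cases ht : i = t e <;> simp_all [incidenceMatrix]

variable [Fintype V]

theorem transpose_mul_incidenceMatrix_apply (s t : E → V) (e f : E) :
    ((incidenceMatrix s t)ᵀ * incidenceMatrix s t) e f =
      (if s e = s f then 1 else 0) - (if s e = t f then 1 else 0)
        - (if t e = s f then 1 else 0) + (if t e = t f then 1 else 0) := by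
  simp only [mul_apply, transpose_apply, incidenceMatrix, of_apply, sub_mul, mul_sub,
    sum_sub_distrib, ite_mul, one_mul, zero_mul, sum_ite_eq', mem_univ, if_true]
  ring

theorem abs_transpose_mul_abs_incidenceMatrix_apply {s t : E → V} (hst : ∀ e, s e ≠ t e)
    (e f : E) :
    ((of fun i e => |incidenceMatrix s t i e|)ᵀ * of fun i e => |incidenceMatrix s t i e|) e f =
      (if s e = s f then 1 else 0) + (if s e = t f then 1 else 0)
        + (if t e = s f then 1 else 0) + (if t e = t f then 1 else 0) := by
  simp only [mul_apply, transpose_apply, of_apply, abs_incidenceMatrix_apply (hst _), add_mul,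
    mul_add, sum_add_distrib, ite_mul, one_mul, zero_mul, sum_ite_eq', mem_univ, if_true]
  ring

theorem sq_transpose_mul_incidenceMatrix_apply [DecidableEq E] {s t : E → V}
    (hst : ∀ e, s e ≠ t e)
    (hdist : ∀ e f, e ≠ f → ¬((s e = s f ∧ t e = t f) ∨ (s e = t f ∧ t e = s f))) (e f : E) :
    ((incidenceMatrix s t)ᵀ * incidenceMatrix s t) e f ^ 2 =
      ((2 : ℝ) • (1 : Matrix E E ℝ) + (of fun i e => |incidenceMatrix s t i e|)ᵀ *
        of fun i e => |incidenceMatrix s t i e|) e f := by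
  rw [Matrix.add_apply, Matrix.smul_apply, one_apply, transpose_mul_incidenceMatrix_apply,
    abs_transpose_mul_abs_incidenceMatrix_apply hst]
  obtain rfl | hef := eq_or_ne e f
  · simp only [hst e, (hst e).symm, if_true, if_false]
    norm_num
  · have hshared := hdist e f hef
    have hse := hst e
    have hsf := hst f
    clear hst hdist
    by_cases h₁ : s e = s f <;> by_cases h₂ : s e = t f <;> by_cases h₃ : t e = s f <;>
      by_cases h₄ : t e = t f <;> simp_all

end Incidence

/-- For the node-arc incidence matrix `B` of a graph (columns `e_{s e} − e_{t e}`,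
distinct endpoints, each unordered pair appearing at most once), the composition
`A A*` (where `A*w = B Diag(w) Bᵀ` and `A X = diag(Bᵀ X B)`) has matrix
representation `2I + |B|ᵀ|B|`: for every `w`, `A(A*w) = (2I + |B|ᵀ|B|) w`. -/
theorem incidence_AAstar (n m : ℕ) (s t : Fin m → Fin n)
    (hst : ∀ e, s e ≠ t e)
    (hdist : ∀ e f, e ≠ f →
      ¬((s e = s f ∧ t e = t f) ∨ (s e = t f ∧ t e = s f)))
    (B : Matrix (Fin n) (Fin m) ℝ)
    (hB : B = Matrix.of fun i e =>
      (if i = s e then (1 : ℝ) else 0) - (if i = t e then 1 else 0))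
    (w : Fin m → ℝ) :
    (fun e => (Bᵀ * (B * Matrix.diagonal w * Bᵀ) * B) e e) =
      ((2 : ℝ) • (1 : Matrix (Fin m) (Fin m) ℝ) +
        (Matrix.of fun i e => |B i e|)ᵀ * (Matrix.of fun i e => |B i e|)).mulVec w := by
  change B = incidenceMatrix s t at hB
  subst hB
  funext e
  rw [transpose_mul_mul_diagonal_mul_transpose_mul_apply_self, mulVec, dotProduct]
  exact sum_congr rfl fun f _ => by rw [sq_transpose_mul_incidenceMatrix_apply hst hdist]
end

section
/- (Descent property of inexact proximal DCA) Let g be convex and h convex and differentiable, and define f(w) = g(w) − h(A*w). Fix σ_k > 0 and w^k, and let f^k(w) = g(w) − h(A*w^k) − ⟨∇h(A*w^k), A*w − A*w^k⟩ + (σ_k/2)‖w − w^k‖² + (σ_k/2)‖A*w − A*w^k‖². Suppose w^{k+1} minimizes w ↦ f^k(w) + ⟨δ^k, w⟩ and the error vector satisfies ‖δ^k‖ ≤ (σ_k/4)‖w^{k+1} − w^k‖ + σ_k‖A*w^{k+1} − A*w^k‖²/(2‖w^{k+1} − w^k‖). Then f(w^{k+1}) ≤ f(w^k) − (σ_k/4)‖w^{k+1}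 − w^k‖². -/
/-!
By the tangent inequality for the convex `h`, the surrogate `f^k` dominates `f` plus the two
proximal terms, and it agrees with `f` at `w^k`. Testing the minimality of `w^{k+1}` against
`w^k` costs at most `‖δ^k‖ ‖w^{k+1} − w^k‖`, which the error condition bounds by
`(σ/4)‖w^{k+1} − w^k‖² + (σ/2)‖A*w^{k+1} − A*w^k‖²`; the proximal terms absorb this and leave
a decrease of `(σ/4)‖w^{k+1} − w^k‖²`.
-/

open scoped RealInnerProductSpace

theorem ConvexOn.add_le_of_hasFDerivAt {E : Type*} [NormedAddCommGroup E] [NormedSpace ℝ E]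
    {s : Set E} {f : E → ℝ} {f' : E →L[ℝ] ℝ} {x : E} (hf : ConvexOn ℝ s f)
    (hx : x ∈ s) (hf' : HasFDerivAt f f' x) {y : E} (hy : y ∈ s) :
    f x + f' (y - x) ≤ f y := by
  let ℓ : ℝ →ᵃ[ℝ] E := AffineMap.lineMap x y
  have hφ : ConvexOn ℝ (ℓ ⁻¹' s) (f ∘ ℓ) := hf.comp_affineMap ℓ
  have hφ' : HasDerivAt (f ∘ ℓ) (f' (y - x)) 0 := by
    rw [← AffineMap.lineMap_apply_zero x y (k := ℝ)] at hf'
    exact hf'.comp_hasDerivAt 0 AffineMap.hasDerivAt_lineMap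
  have := hφ.le_slope_of_hasDerivAt (by simpa [ℓ] using hx) (by simpa [ℓ] using hy) one_pos hφ'
  simp only [ℓ, slope_def_field, Function.comp_apply, AffineMap.lineMap_apply_one,
    AffineMap.lineMap_apply_zero, sub_zero, div_one] at this
  linarith

theorem ConvexOn.add_inner_le_of_hasGradientAt {F : Type*} [NormedAddCommGroup F]
    [InnerProductSpace ℝ F] [CompleteSpace F] {h : F → ℝ} {h' : F} {x : F}
    (hh : ConvexOn ℝ Set.univ h) (hgrad : HasGradientAt h h' x) (y : F) :
    h x + ⟪h', y - x⟫ ≤ h y :=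
  hh.add_le_of_hasFDerivAt (Set.mem_univ x) hgrad.hasFDerivAt (Set.mem_univ y)

theorem inexact_proximal_dca_descent_general
    {E F : Type*} [NormedAddCommGroup E] [InnerProductSpace ℝ E]
    [NormedAddCommGroup F] [InnerProductSpace ℝ F] [CompleteSpace F]
    (A : E →ₗ[ℝ] F) (g : E → ℝ) (h : F → ℝ) (h' : F → F)
    (hh : ConvexOn ℝ Set.univ h)
    (hgrad : ∀ x, HasGradientAt h (h' x) x)
    (σ : ℝ) (wk wk1 δ : E) (hne : wk1 ≠ wk)
    (f : E → ℝ) (hf : f = fun w => g w - h (A w))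
    (fk : E → ℝ)
    (hfk : fk = fun w => g w - h (A wk) - ⟪h' (A wk), A w - A wk⟫
      + σ / 2 * ‖w - wk‖ ^ 2 + σ / 2 * ‖A w - A wk‖ ^ 2)
    (hmin : ∀ w, fk wk1 + ⟪δ, wk1⟫ ≤ fk w + ⟪δ, w⟫)
    (herr : ‖δ‖ ≤ σ / 4 * ‖wk1 - wk‖ +
      σ * ‖A wk1 - A wk‖ ^ 2 / (2 * ‖wk1 - wk‖)) :
    f wk1 ≤ f wk - σ / 4 * ‖wk1 - wk‖ ^ 2 := by
  have hstep : 0 < ‖wk1 - wk‖ := norm_pos_iff.2 (sub_ne_zero.2 hne)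
  have hmajorant : f wk1 + σ / 2 * ‖wk1 - wk‖ ^ 2 + σ / 2 * ‖A wk1 - A wk‖ ^ 2 ≤ fk wk1 := by
    have := hh.add_inner_le_of_hasGradientAt (hgrad (A wk)) (A wk1)
    simp only [hf, hfk]
    linarith
  have htouch : fk wk = f wk := by simp [hf, hfk]
  have hinexact : fk wk1 ≤ f wk + ‖δ‖ * ‖wk1 - wk‖ := by
    have hcs : ⟪δ, wk - wk1⟫ ≤ ‖δ‖ * ‖wk1 - wk‖ := by
      simpa only [norm_sub_rev] using real_inner_le_norm δ (wk - wk1)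
    rw [inner_sub_right] at hcs
    linarith [hmin wk]
  have hδ : ‖δ‖ * ‖wk1 - wk‖ ≤ σ / 4 * ‖wk1 - wk‖ ^ 2 + σ / 2 * ‖A wk1 - A wk‖ ^ 2 :=
    calc ‖δ‖ * ‖wk1 - wk‖
        ≤ (σ / 4 * ‖wk1 - wk‖ + σ * ‖A wk1 - A wk‖ ^ 2 / (2 * ‖wk1 - wk‖)) * ‖wk1 - wk‖ :=
          mul_le_mul_of_nonneg_right herr hstep.le
      _ = σ / 4 * ‖wk1 - wk‖ ^ 2 + σ / 2 * ‖A wk1 - A wk‖ ^ 2 := by field_simp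
  linarith

/-- Descent property of the inexact proximal DCA: if `w^{k+1}` minimizes the
majorized subproblem `f^k + ⟨δ^k, ·⟩` and the error vector `δ^k` satisfies the
stopping condition, then `f(w^{k+1}) ≤ f(w^k) − (σ_k/4)‖w^{k+1} − w^k‖²`. -/
theorem inexact_proximal_dca_descent
    {E F : Type*} [NormedAddCommGroup E] [InnerProductSpace ℝ E]
    [NormedAddCommGroup F] [InnerProductSpace ℝ F] [CompleteSpace F]
    (A : E →ₗ[ℝ] F) (g : E → ℝ) (h : F → ℝ) (h' : F → F)
    (hg : ConvexOn ℝ Set.univ g) (hh : ConvexOn ℝ Set.univ h)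
    (hgrad : ∀ x, HasGradientAt h (h' x) x)
    (σ : ℝ) (hσ : 0 < σ) (wk wk1 δ : E) (hne : wk1 ≠ wk)
    (f : E → ℝ) (hf : f = fun w => g w - h (A w))
    (fk : E → ℝ)
    (hfk : fk = fun w => g w - h (A wk) - ⟪h' (A wk), A w - A wk⟫
      + σ / 2 * ‖w - wk‖ ^ 2 + σ / 2 * ‖A w - A wk‖ ^ 2)
    (hmin : ∀ w, fk wk1 + ⟪δ, wk1⟫ ≤ fk w + ⟪δ, w⟫)
    (herr : ‖δ‖ ≤ σ / 4 * ‖wk1 - wk‖ +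
      σ * ‖A wk1 - A wk‖ ^ 2 / (2 * ‖wk1 - wk‖)) :
    f wk1 ≤ f wk - σ / 4 * ‖wk1 - wk‖ ^ 2 :=
  inexact_proximal_dca_descent_general A g h h' hh hgrad σ wk wk1 δ hne f hf fk hfk hmin herr
end

section
/- (Bounded level sets) Suppose S ∈ S^n is positive definite and the graph is connected, so that A*1 + J is positive definite. Then the condition {w ∈ ℝ^{|E|}_+ : ⟨S, A*w⟩ ≤ 0} = {0} holds, and the level set {w : −log det(A*w + J) + ⟨S, A*w⟩ + δ(w|ℝ^{|E|}_+) ≤ α} is bounded for every α ∈ ℝ; consequently the function is bounded below and attains its minimum on a nonempty bounded set. -/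
/-!
Writing `b_e` for the `e`-th column of `B`, `⟨S, A*w⟩ = ∑ₑ (b_eᵀ S b_e) wₑ` with all
coefficients positive, which gives the recession cone condition. Applying `log x ≤ x - 1` to
the eigenvalues of `ε (A*w + J)` gives `log det (A*w + J) ≤ ε tr (A*w + J) + C(ε)`, and
`tr (A*w) = ∑ₑ |b_e|² wₑ`; for small `ε` the linear term `⟨S, A*w⟩` dominates, so the
objective is at least `ε ∑ₑ wₑ + C'(ε)`. On positive semidefinite matrices the sublevel set
`{M ≻ 0, -log det M + x ≤ α}` is the closed set `{exp (x - α) ≤ det M}`, so the sublevel sets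
are compact and the minimum is attained.
-/
open Matrix Finset Topology

theorem exists_pos_forall_mul_add_one_le {ι : Type*} [Finite ι] {q : ι → ℝ} (hq : ∀ i, 0 < q i)
    (r : ι → ℝ) : ∃ ε > 0, ∀ i, ε * (r i + 1) ≤ q i := by
  have h : ∀ᶠ ε in 𝓝[>] 0, ∀ i, ε * (r i + 1) ≤ q i := by
    refine Filter.eventually_all.2 fun i => ?_
    have : Filter.Tendsto (fun ε : ℝ => ε * (r i + 1)) (𝓝 0) (𝓝 0) :=
      (continuous_id.mul continuous_const).tendsto' 0 0 (zero_mul _)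
    exact (this.eventually (gt_mem_nhds (hq i))).filter_mono nhdsWithin_le_nhds |>.mono
      fun _ h => h.le
  exact (h.and self_mem_nhdsWithin).exists.imp fun ε h => ⟨h.2, h.1⟩

theorem eq_zero_of_sum_mul_nonpos {ι : Type*} [Fintype ι] {q w : ι → ℝ} (hq : ∀ i, 0 < q i)
    (hw : ∀ i, 0 ≤ w i) (h : ∑ i, q i * w i ≤ 0) : w = 0 := by
  have hnn : ∀ i ∈ univ, 0 ≤ q i * w i := fun i _ => mul_nonneg (hq i).le (hw i)
  have hzero := (sum_eq_zero_iff_of_nonneg hnn).1 (h.antisymm (sum_nonneg hnn))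
  funext i
  exact (mul_eq_zero.1 (hzero i (mem_univ i))).resolve_left (hq i).ne'

theorem isBounded_setOf_nonneg_sum_le {ι : Type*} [Fintype ι] (R : ℝ) :
    Bornology.IsBounded {w : ι → ℝ | (∀ i, 0 ≤ w i) ∧ ∑ i, w i ≤ R} :=
  (Metric.isBounded_Icc 0 fun _ => R).subset fun _ ⟨hw, hR⟩ =>
    ⟨hw, fun i => (single_le_sum (fun j _ => hw j) (mem_univ i)).trans hR⟩

namespace Matrix

variable {n m : Type*} [Fintype n]

theorem PosDef.log_det_le_trace_sub_card [DecidableEq n] {M : Matrix n n ℝ} (hM : M.PosDef) :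
    Real.log M.det ≤ M.trace - Fintype.card n := by
  rw [hM.1.det_eq_prod_eigenvalues, hM.1.trace_eq_sum_eigenvalues]
  simp only [RCLike.ofReal_real_eq_id, id_eq]
  rw [Real.log_prod fun i _ => (hM.eigenvalues_pos i).ne', Fintype.card_eq_sum_ones,
    Nat.cast_sum, Nat.cast_one, ← sum_sub_distrib]
  exact sum_le_sum fun i _ => Real.log_le_sub_one_of_pos (hM.eigenvalues_pos i)

theorem PosDef.log_det_le_smul_trace [DecidableEq n] {M : Matrix n n ℝ} (hM : M.PosDef)
    {ε : ℝ} (hε : 0 < ε) :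
    Real.log M.det ≤ ε * M.trace - Fintype.card n * (1 + Real.log ε) := by
  have h := (hM.smul hε).log_det_le_trace_sub_card
  rw [det_smul, trace_smul, smul_eq_mul, Real.log_mul (by positivity) hM.det_pos.ne',
    Real.log_pow] at h
  linarith

theorem posSemidef_of_const {c : ℝ} (hc : 0 ≤ c) : (of fun _ _ : n => c).PosSemidef := by
  have h := (posSemidef_vecMulVec_self_star (fun _ : n => (1 : ℝ))).smul hc
  convert h using 1
  ext i j
  simp [vecMulVec]

theorem PosSemidef.posDef_and_neg_log_det_add_le_iff [DecidableEq n] {M : Matrix n n ℝ}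
    (hM : M.PosSemidef) (x α : ℝ) :
    (M.PosDef ∧ -Real.log M.det + x ≤ α) ↔ Real.exp (x - α) ≤ M.det := by
  rw [hM.posDef_iff_det_ne_zero]
  constructor
  · rintro ⟨hdet, hα⟩
    rw [← Real.le_log_iff_exp_le (hM.det_nonneg.lt_of_ne' hdet)]
    linarith
  · intro h
    have hdet : 0 < M.det := (Real.exp_pos _).trans_le h
    rw [← Real.le_log_iff_exp_le hdet] at h
    exact ⟨hdet.ne', by linarith⟩

theorem exists_forall_neg_log_det_add_le {X : Type*} [PseudoMetricSpace X] [ProperSpace X]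
    [DecidableEq n] {C : Set X} (hC : IsClosed C) {F : X → Matrix n n ℝ} (hF : Continuous F)
    (hFC : ∀ x ∈ C, (F x).PosSemidef) {f : X → ℝ} (hf : Continuous f) {x₁ : X} (hx₁ : x₁ ∈ C)
    (hx₁F : (F x₁).PosDef)
    (hbdd : ∀ α, Bornology.IsBounded
      {x | x ∈ C ∧ (F x).PosDef ∧ -Real.log (F x).det + f x ≤ α}) :
    ∃ x₀ ∈ C, (F x₀).PosDef ∧ ∀ x ∈ C, (F x).PosDef →
      -Real.log (F x₀).det + f x₀ ≤ -Real.log (F x).det + f x := by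
  set α := -Real.log (F x₁).det + f x₁
  set K := {x | x ∈ C ∧ (F x).PosDef ∧ -Real.log (F x).det + f x ≤ α}
  have hK : K = C ∩ {x | Real.exp (f x - α) ≤ (F x).det} := by
    ext x
    exact and_congr_right fun hx => (hFC x hx).posDef_and_neg_log_det_add_le_iff _ _
  have hKc : IsCompact K := Metric.isCompact_of_isClosed_isBounded
    (hK ▸ hC.inter (isClosed_le (by fun_prop) hF.matrix_det)) (hbdd α)
  have hcont : ContinuousOn (fun x => -Real.log (F x).det + f x) K :=
    ((hF.matrix_det.continuousOn.log fun x hx => hx.2.1.det_pos.ne').neg).add hf.continuousOn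
  obtain ⟨x₀, ⟨hx₀C, hx₀F, hx₀α⟩, hmin⟩ := hKc.exists_isMinOn ⟨x₁, hx₁, hx₁F, le_rfl⟩ hcont
  refine ⟨x₀, hx₀C, hx₀F, fun x hx hxF => ?_⟩
  by_cases hxα : -Real.log (F x).det + f x ≤ α
  · exact hmin ⟨hx, hxF, hxα⟩
  · linarith

theorem transpose_mul_mul_apply_self (S : Matrix n n ℝ) (B : Matrix n m ℝ) (e : m) :
    (Bᵀ * S * B) e e = Bᵀ e ⬝ᵥ S *ᵥ Bᵀ e := by
  simp only [mul_apply, transpose_apply, dotProduct, mulVec, sum_mul, mul_sum]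
  rw [sum_comm]
  exact sum_congr rfl fun _ _ => sum_congr rfl fun _ _ => by ring

variable [Fintype m] [DecidableEq m]

theorem trace_mul_mul_diagonal_mul_transpose (S : Matrix n n ℝ) (B : Matrix n m ℝ)
    (w : m → ℝ) :
    trace (S * (B * diagonal w * Bᵀ)) = ∑ e, (Bᵀ * S * B) e e * w e := by
  rw [← Matrix.mul_assoc, ← Matrix.mul_assoc, trace_mul_comm, ← Matrix.mul_assoc,
    ← Matrix.mul_assoc]
  simp [trace, mul_diagonal]

theorem posSemidef_mul_diagonal_mul_transpose (B : Matrix n m ℝ) {w : m → ℝ}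
    (hw : 0 ≤ w) : (B * diagonal w * Bᵀ).PosSemidef := by
  simpa using (PosSemidef.diagonal hw).mul_mul_conjTranspose_same B

theorem le_neg_log_det_add_trace [DecidableEq n] {S J : Matrix n n ℝ} {B : Matrix n m ℝ} {ε : ℝ}
    (hε : 0 < ε)
    (hεS : ∀ e, ε * ((Bᵀ * B) e e + 1) ≤ (Bᵀ * S * B) e e) {w : m → ℝ} (hw : ∀ e, 0 ≤ w e)
    (hM : (B * diagonal w * Bᵀ + J).PosDef) :
    ε * ∑ e, w e + Fintype.card n * (1 + Real.log ε) - ε * trace J ≤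
      -Real.log (B * diagonal w * Bᵀ + J).det + trace (S * (B * diagonal w * Bᵀ)) := by
  have hlog := hM.log_det_le_smul_trace hε
  have htr : trace (B * diagonal w * Bᵀ) = ∑ e, (Bᵀ * B) e e * w e := by
    simpa using trace_mul_mul_diagonal_mul_transpose 1 B w
  have hS : ε * ∑ e, (Bᵀ * B) e e * w e + ε * ∑ e, w e ≤ ∑ e, (Bᵀ * S * B) e e * w e := by
    rw [mul_sum, mul_sum, ← sum_add_distrib]
    gcongr with e
    nlinarith [hεS e, hw e]
  rw [trace_add, htr] at hlog
  rw [trace_mul_mul_diagonal_mul_transpose]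
  linarith

end Matrix

/-- Bounded level sets: if `S` is positive definite and the graph is connected
(so that `A*1 + J` is positive definite), then the recession cone condition
`{w ≥ 0 : ⟨S, A*w⟩ ≤ 0} = {0}` holds, every level set of
`w ↦ −log det(A*w + J) + ⟨S, A*w⟩` over the feasible region `w ≥ 0` is
bounded, and the objective is bounded below and attains its minimum. -/
theorem logdet_bounded_level_sets (n m : ℕ) (s t : Fin m → Fin n)
    (hst : ∀ e, s e ≠ t e)
    (B : Matrix (Fin n) (Fin m) ℝ)
    (hB : B = Matrix.of fun i e =>
      (if i = s e then (1 : ℝ) else 0) - (if i = t e then 1 else 0))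
    (S : Matrix (Fin n) (Fin n) ℝ) (hS : S.PosDef)
    (L : (Fin m → ℝ) → Matrix (Fin n) (Fin n) ℝ)
    (hL : L = fun w => B * Matrix.diagonal w * Bᵀ)
    (J : Matrix (Fin n) (Fin n) ℝ) (hJ : J = Matrix.of fun _ _ => (1 : ℝ) / n)
    (hpd : (L (fun _ => 1) + J).PosDef)
    (gfun : (Fin m → ℝ) → ℝ)
    (hg : gfun = fun v => -Real.log (L v + J).det + Matrix.trace (S * L v)) :
    ({w : Fin m → ℝ | (∀ e, 0 ≤ w e) ∧ Matrix.trace (S * L w) ≤ 0} = {0}) ∧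
    (∀ α : ℝ, Bornology.IsBounded
      {w : Fin m → ℝ | (∀ e, 0 ≤ w e) ∧ (L w + J).PosDef ∧ gfun w ≤ α}) ∧
    (∃ w0 : Fin m → ℝ, (∀ e, 0 ≤ w0 e) ∧ (L w0 + J).PosDef ∧
      ∀ w : Fin m → ℝ, (∀ e, 0 ≤ w e) → (L w + J).PosDef → gfun w0 ≤ gfun w) := by
  subst hL hg
  have hq (e : Fin m) : 0 < (Bᵀ * S * B) e e := by
    have hcol : Bᵀ e ≠ 0 := fun h => by simpa [hB, hst e] using congrFun h (s e)
    simpa [transpose_mul_mul_apply_self] using hS.dotProduct_mulVec_pos hcol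
  obtain ⟨ε, hε, hεS⟩ := exists_pos_forall_mul_add_one_le hq fun e => (Bᵀ * B) e e
  have hbdd (α : ℝ) : Bornology.IsBounded
      {w : Fin m → ℝ | (∀ e, 0 ≤ w e) ∧ (B * diagonal w * Bᵀ + J).PosDef ∧
        -Real.log (B * diagonal w * Bᵀ + J).det + trace (S * (B * diagonal w * Bᵀ)) ≤ α} :=
    (isBounded_setOf_nonneg_sum_le ((α - n * (1 + Real.log ε) + ε * trace J) / ε)).subset
      fun w ⟨hw, hM, hα⟩ => ⟨hw, by
        have hlower := le_neg_log_det_add_trace hε hεS hw hM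
        rw [Fintype.card_fin] at hlower
        rw [le_div_iff₀ hε]
        linarith⟩
  refine ⟨?_, hbdd, ?_⟩
  · ext w
    simp only [Set.mem_ofPred_eq, Set.mem_singleton_iff, trace_mul_mul_diagonal_mul_transpose]
    refine ⟨fun ⟨hw, h⟩ => eq_zero_of_sum_mul_nonpos hq hw h, ?_⟩
    rintro rfl
    simp
  · have hJ : J.PosSemidef := hJ ▸ posSemidef_of_const (by positivity)
    exact exists_forall_neg_log_det_add_le (C := Set.Ici 0)
      (F := fun w => B * diagonal w * Bᵀ + J) (f := fun w => trace (S * (B * diagonal w * Bᵀ)))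
      isClosed_Ici (by fun_prop)
      (fun w hw => (posSemidef_mul_diagonal_mul_transpose B hw).add hJ)
      (by fun_prop) (x₁ := fun _ => 1) (fun _ => zero_le_one) hpd hbdd
end
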